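/- Coercivity of the spatial quantile objective: let x be a random vector in ℝ^d and u ∈ ℝ^d with ‖u‖ < 1. Then g(Q) = E[Φ(u, x − Q) − Φ(u, x)] satisfies g(Q) → ∞ as ‖Q‖ → ∞; consequently a minimizer (the spatial u-quantile) exists. -/

import Mathlib

open RealInnerProductSpace MeasureTheory Filter Topology

/-! Pointwise `‖x - Q‖ - ‖x‖ ≥ ‖Q‖ - 2 min(‖x‖, ‖Q‖)` and `⟪u, Q⟫ ≤ ‖u‖ ‖Q‖`, so the objective is
at least `(1 - ‖u‖) ‖Q‖ - 2 E[min(‖x‖, ‖Q‖)]`, and `E[min(‖x‖, t)] = o(t)` by dominated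
convergence. The objective is Lipschitz, so in finite dimension this
coercivity gives a minimizer by the extreme value theorem. -/

section NormedGroup

variable {E : Type*} [NormedAddCommGroup E]

lemma norm_sub_two_mul_min_norm_le_norm_sub_sub_norm (x Q : E) :
    ‖Q‖ - 2 * min ‖x‖ ‖Q‖ ≤ ‖x - Q‖ - ‖x‖ := by
  have hQ : ‖Q‖ ≤ ‖x - Q‖ + ‖x‖ := norm_sub_rev Q x ▸ norm_le_norm_sub_add Q x
  have hx : ‖x‖ ≤ ‖x - Q‖ + ‖Q‖ := norm_le_norm_sub_add x Q
  rcases min_cases ‖x‖ ‖Q‖ with ⟨h, -⟩ | ⟨h, -⟩ <;> rw [h] <;> linarith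

variable [MeasurableSpace E] [OpensMeasurableSpace E] (μ : Measure E) [IsFiniteMeasure μ]

lemma integrable_norm_sub_sub_norm (Q : E) : Integrable (fun x => ‖x - Q‖ - ‖x‖) μ := by
  refine .of_bound (by fun_prop) ‖Q‖ (ae_of_all _ fun x => ?_)
  simpa [Real.norm_eq_abs, abs_sub_comm] using abs_norm_sub_norm_le (x - Q) x

lemma lipschitzWith_integral_norm_sub_sub_norm :
    LipschitzWith (μ Set.univ).toNNReal (fun Q => ∫ x, (‖x - Q‖ - ‖x‖) ∂μ) := by
  refine LipschitzWith.of_dist_le_mul fun Q Q' => ?_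
  rw [Real.dist_eq, ← integral_sub (integrable_norm_sub_sub_norm μ Q)
    (integrable_norm_sub_sub_norm μ Q')]
  have hbound (x : E) : ‖(‖x - Q‖ - ‖x‖) - (‖x - Q'‖ - ‖x‖)‖ ≤ dist Q Q' := by
    rw [Real.norm_eq_abs, sub_sub_sub_cancel_right, dist_comm, dist_eq_norm]
    simpa using abs_norm_sub_norm_le (x - Q) (x - Q')
  exact (norm_integral_le_of_norm_le_const (ae_of_all μ hbound)).trans_eq (mul_comm _ _)

lemma tendsto_inv_mul_integral_min_norm_atTop :
    Tendsto (fun t : ℝ => t⁻¹ * ∫ x, min ‖x‖ t ∂μ) atTop (𝓝 0) := by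
  have hbound : ∀ᶠ t : ℝ in atTop, ∀ x : E, 0 ≤ t⁻¹ * min ‖x‖ t ∧ t⁻¹ * min ‖x‖ t ≤ 1 ∧
      t⁻¹ * min ‖x‖ t ≤ t⁻¹ * ‖x‖ := by
    filter_upwards [eventually_gt_atTop 0] with t ht x
    have ht' : 0 ≤ t⁻¹ := inv_nonneg.2 ht.le
    refine ⟨by positivity, ?_, mul_le_mul_of_nonneg_left (min_le_left _ _) ht'⟩
    calc t⁻¹ * min ‖x‖ t ≤ t⁻¹ * t := mul_le_mul_of_nonneg_left (min_le_right _ _) ht'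
      _ = 1 := inv_mul_cancel₀ ht.ne'
  have hlim (x : E) : Tendsto (fun t : ℝ => t⁻¹ * min ‖x‖ t) atTop (𝓝 0) :=
    squeeze_zero' (hbound.mono fun t h => (h x).1) (hbound.mono fun t h => (h x).2.2)
      (by simpa using tendsto_inv_atTop_zero.mul_const ‖x‖)
  simp_rw [← integral_const_mul]
  simpa using tendsto_integral_filter_of_dominated_convergence (fun _ => (1 : ℝ))
    (Eventually.of_forall fun t => by fun_prop)
    (hbound.mono fun t h => ae_of_all _ fun x => by
      rw [Real.norm_of_nonneg (h x).1]; exact (h x).2.1)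
    (integrable_const 1) (ae_of_all _ hlim)

lemma integrable_min_norm {t : ℝ} (ht : 0 ≤ t) : Integrable (fun x => min ‖x‖ t) μ :=
  .of_bound (by fun_prop) t (ae_of_all _ fun x => by
    rw [Real.norm_of_nonneg (le_min (norm_nonneg x) ht)]; exact min_le_right _ _)

end NormedGroup

section InnerProductSpace

variable {E : Type*} [NormedAddCommGroup E] [InnerProductSpace ℝ E] [MeasurableSpace E]

/-- `E[Φ(u, x - Q) - Φ(u, x)]` with `Φ(u, s) = ‖s‖ + ⟪u, s⟫`; subtracting `Φ(u, x)` keeps the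
integrand bounded by `(1 + ‖u‖) ‖Q‖`, so no moment assumption on `μ` is needed. -/
noncomputable def spatialQuantileObjective (μ : Measure E) (u Q : E) : ℝ :=
  ∫ x, ((‖x - Q‖ + ⟪u, x - Q⟫) - (‖x‖ + ⟪u, x⟫)) ∂μ

variable [OpensMeasurableSpace E] (μ : Measure E) [IsProbabilityMeasure μ] (u : E)

lemma spatialQuantileObjective_eq (Q : E) :
    spatialQuantileObjective μ u Q = (∫ x, (‖x - Q‖ - ‖x‖) ∂μ) - ⟪u, Q⟫ := by
  have hpointwise (x : E) :
      (‖x - Q‖ + ⟪u, x - Q⟫) - (‖x‖ + ⟪u, x⟫) = (‖x - Q‖ - ‖x‖) - ⟪u, Q⟫ := by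
    rw [inner_sub_right]; ring
  simp_rw [spatialQuantileObjective, hpointwise]
  rw [integral_sub (integrable_norm_sub_sub_norm μ Q) (integrable_const _), integral_const,
    probReal_univ, one_smul]

lemma continuous_spatialQuantileObjective : Continuous (spatialQuantileObjective μ u) := by
  simp_rw [funext (spatialQuantileObjective_eq μ u)]
  exact (lipschitzWith_integral_norm_sub_sub_norm μ).continuous.sub (by fun_prop)

lemma sub_integral_min_norm_le_spatialQuantileObjective (Q : E) :
    (1 - ‖u‖) * ‖Q‖ - 2 * ∫ x, min ‖x‖ ‖Q‖ ∂μ ≤ spatialQuantileObjective μ u Q := by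
  have hmin := integrable_min_norm μ (norm_nonneg Q)
  have hlower : ‖Q‖ - 2 * ∫ x, min ‖x‖ ‖Q‖ ∂μ ≤ ∫ x, (‖x - Q‖ - ‖x‖) ∂μ :=
    calc ‖Q‖ - 2 * ∫ x, min ‖x‖ ‖Q‖ ∂μ = ∫ x, (‖Q‖ - 2 * min ‖x‖ ‖Q‖) ∂μ := by
          rw [integral_sub (integrable_const _) (hmin.const_mul 2), integral_const_mul,
            integral_const, probReal_univ, one_smul]
      _ ≤ ∫ x, (‖x - Q‖ - ‖x‖) ∂μ :=
          integral_mono ((integrable_const _).sub (hmin.const_mul 2))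
            (integrable_norm_sub_sub_norm μ Q) (norm_sub_two_mul_min_norm_le_norm_sub_sub_norm · Q)
  rw [spatialQuantileObjective_eq]
  linarith [real_inner_le_norm u Q]

lemma tendsto_spatialQuantileObjective (hu : ‖u‖ < 1) :
    Tendsto (spatialQuantileObjective μ u) (comap norm atTop) atTop := by
  have hlinear : Tendsto (fun t : ℝ => (1 - ‖u‖) * t - 2 * ∫ x, min ‖x‖ t ∂μ) atTop atTop := by
    have hfactor : Tendsto (fun t : ℝ => (1 - ‖u‖) - 2 * (t⁻¹ * ∫ x, min ‖x‖ t ∂μ)) atTop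
        (𝓝 (1 - ‖u‖)) := by
      simpa using (tendsto_inv_mul_integral_min_norm_atTop μ).const_mul 2 |>.const_sub (1 - ‖u‖)
    refine (tendsto_id.atTop_mul_pos (sub_pos.2 hu) hfactor).congr' ?_
    filter_upwards [eventually_gt_atTop 0] with t ht
    simp only [id]
    field_simp
  exact tendsto_atTop_mono (sub_integral_min_norm_le_spatialQuantileObjective μ u)
    (hlinear.comp tendsto_comap)

lemma exists_isMinOn_spatialQuantileObjective [ProperSpace E] (hu : ‖u‖ < 1) :
    ∃ Q, IsMinOn (spatialQuantileObjective μ u) Set.univ Q := by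
  obtain ⟨Q, hQ⟩ := (continuous_spatialQuantileObjective μ u).exists_forall_le
    (by simpa [Metric.cobounded_eq_cocompact] using tendsto_spatialQuantileObjective μ u hu)
  exact ⟨Q, fun Q' _ => hQ Q'⟩

end InnerProductSpace

/-- Coercivity of the spatial quantile objective: for ‖u‖ < 1, the objective
g(Q) = E[Φ(u, x − Q) − Φ(u, x)] tends to ∞ as ‖Q‖ → ∞, and consequently a
minimizer (the spatial u-quantile) exists. -/
theorem stmt18 {d : ℕ} (μ : Measure (EuclideanSpace ℝ (Fin d)))
    [IsProbabilityMeasure μ]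
    (u : EuclideanSpace ℝ (Fin d)) (hu : ‖u‖ < 1) :
    Tendsto
      (fun Q : EuclideanSpace ℝ (Fin d) =>
        ∫ x, ((‖x - Q‖ + ⟪u, x - Q⟫) - (‖x‖ + ⟪u, x⟫)) ∂μ)
      (comap norm atTop) atTop ∧
    ∃ Q : EuclideanSpace ℝ (Fin d),
      IsMinOn (fun Q' : EuclideanSpace ℝ (Fin d) =>
        ∫ x, ((‖x - Q'‖ + ⟪u, x - Q'⟫) - (‖x‖ + ⟪u, x⟫)) ∂μ) Set.univ Q :=
  ⟨tendsto_spatialQuantileObjective μ u hu, exists_isMinOn_spatialQuantileObjective μ u hu⟩
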